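/- arXiv:2302.12797 — 2 statements merged into one kernel-verified Lean document; each statement's English description precedes it below -/
import Mathlib

section
/- Let (q_j)_{j∈ℤ} be real numbers with q_m ≤ q_j ≤ q_M for all j, let the kernel weights satisfy γ₀ ≥ γ₁ ≥ … ≥ γ_{N−1} ≥ 0, let V₁ be continuously differentiable and V₂ be differentiable, and assume either (V₁' ≤ 0 and V₂' ≥ 0) or (V₁' ≥ 0 and V₂' ≤ 0) on the relevant ranges. Let L₁ be a bound for |V₁'| on the interval of attainable nonlocal values and L₂ a bound for |V₂'| on [q_m, q_M]. Then with V_j := V₁( Σ_{k=0}^{N−1} γ_k V₂(q_{j+k+1}) ), for every j ∈ ℤ one has V_{j−1} − V_j ≥ L₁ L₂ γ₀ ( q_m − q_j ). -/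
open Finset

/-- Discrete nonlocal velocity `V_j = V₁( Σ_{k=0}^{N-1} γ_k V₂(q_{j+k+1}) )`. -/
noncomputable def discVel (γw : ℕ → ℝ) (N : ℕ) (V₁ V₂ : ℝ → ℝ) (u : ℤ → ℝ) (j : ℤ) : ℝ :=
  V₁ (∑ k ∈ Finset.range N, γw k * V₂ (u (j + (k : ℤ) + 1)))

/-- The interval of attainable nonlocal values
`[ (Σ_k γ_k) · inf_{[q_m,q_M]} V₂ , (Σ_k γ_k) · sup_{[q_m,q_M]} V₂ ]`. -/
noncomputable def attainSet (γw : ℕ → ℝ) (N : ℕ) (V₂ : ℝ → ℝ) (qm qM : ℝ) : Set ℝ :=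
  Set.Icc ((∑ k ∈ Finset.range N, γw k) * sInf (V₂ '' Set.Icc qm qM))
          ((∑ k ∈ Finset.range N, γw k) * sSup (V₂ '' Set.Icc qm qM))

/-! Write `S_i = Σ_{k<N} γ_k g_{i+k+1}`, so that `V_i = V₁(S_i)` for `g = V₂ ∘ q`. Since
`S_{j-1} = γ₀ g_j + Σ_{k<N-1} γ_{k+1} g_{j+k+1}` and the weights are nonnegative and nonincreasing,
`S_{j-1} - S_j ≤ γ₀ (g_j - c)` for every lower bound `c` of `g` (after subtracting `c` this is a
termwise comparison). If `V₂` is nondecreasing, take `c = V₂(q_m)`; the mean value theorem gives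
`γ₀ (g_j - c) ≤ γ₀ L₂ (q_j - q_m)`. As `V₁` is then nonincreasing, only an increase of its argument
can lower it, and by at most `L₁` times that increase. The other sign case is the same argument
applied to `-g`. -/

noncomputable def nonlocalSum (γw : ℕ → ℝ) (N : ℕ) (g : ℤ → ℝ) (i : ℤ) : ℝ :=
  ∑ k ∈ range N, γw k * g (i + k + 1)

section NonlocalSum

variable {γw : ℕ → ℝ} {N : ℕ} {g : ℤ → ℝ}

theorem discVel_eq_nonlocalSum (V₁ V₂ : ℝ → ℝ) (q : ℤ → ℝ) (j : ℤ) :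
    discVel γw N V₁ V₂ q j = V₁ (nonlocalSum γw N (fun i => V₂ (q i)) j) :=
  rfl

theorem nonlocalSum_sub_const (c : ℝ) (i : ℤ) :
    nonlocalSum γw N (fun i => g i - c) i = nonlocalSum γw N g i - (∑ k ∈ range N, γw k) * c := by
  simp only [nonlocalSum, mul_sub, sum_sub_distrib, sum_mul]

theorem nonlocalSum_neg (i : ℤ) :
    nonlocalSum γw N (fun i => -g i) i = -nonlocalSum γw N g i := by
  simp only [nonlocalSum, mul_neg, sum_neg_distrib]

theorem nonlocalSum_succ_sub_one (n : ℕ) (i : ℤ) :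
    nonlocalSum γw (n + 1) g (i - 1) = γw 0 * g i + ∑ k ∈ range n, γw (k + 1) * g (i + k + 1) := by
  rw [nonlocalSum, sum_range_succ', add_comm]
  congr 1
  · simp
  · refine sum_congr rfl fun k _ => ?_
    congr 2
    push_cast
    ring

theorem nonlocalSum_mem_Icc {a b : ℝ} (hγ : ∀ k < N, 0 ≤ γw k) (hg : ∀ i, g i ∈ Set.Icc a b)
    (i : ℤ) :
    nonlocalSum γw N g i ∈ Set.Icc ((∑ k ∈ range N, γw k) * a) ((∑ k ∈ range N, γw k) * b) := by
  rw [sum_mul, sum_mul]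
  constructor <;> refine sum_le_sum fun k hk => mul_le_mul_of_nonneg_left ?_ (hγ k (mem_range.1 hk))
  exacts [(hg _).1, (hg _).2]

theorem nonlocalSum_mem_attainSet {V₂ : ℝ → ℝ} {q : ℤ → ℝ} {qm qM : ℝ}
    (hγ : ∀ k < N, 0 ≤ γw k) (hV₂ : ContinuousOn V₂ (Set.Icc qm qM))
    (hq : ∀ i, q i ∈ Set.Icc qm qM) (i : ℤ) :
    nonlocalSum γw N (fun i => V₂ (q i)) i ∈ attainSet γw N V₂ qm qM := by
  have hK := isCompact_Icc.image_of_continuousOn hV₂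
  exact nonlocalSum_mem_Icc hγ (fun i => ⟨csInf_le hK.bddBelow (Set.mem_image_of_mem _ (hq i)),
    le_csSup hK.bddAbove (Set.mem_image_of_mem _ (hq i))⟩) i

variable (hN : 0 < N) (hγ_nonneg : ∀ k < N, 0 ≤ γw k) (hγ_mono : ∀ k, k + 1 < N → γw (k + 1) ≤ γw k)
include hN hγ_nonneg hγ_mono

theorem nonlocalSum_sub_one_sub_le_of_nonneg (hg : ∀ i, 0 ≤ g i) (j : ℤ) :
    nonlocalSum γw N g (j - 1) - nonlocalSum γw N g j ≤ γw 0 * g j := by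
  obtain ⟨n, rfl⟩ := Nat.exists_eq_add_one_of_ne_zero hN.ne'
  have hshift : ∑ k ∈ range n, γw (k + 1) * g (j + k + 1) ≤ nonlocalSum γw (n + 1) g j := by
    rw [nonlocalSum, sum_range_succ]
    refine le_add_of_le_of_nonneg (sum_le_sum fun k hk => ?_) ?_
    · exact mul_le_mul_of_nonneg_right (hγ_mono k (by simp at hk; omega)) (hg _)
    · exact mul_nonneg (hγ_nonneg n n.lt_succ_self) (hg _)
  rw [nonlocalSum_succ_sub_one]
  linarith

theorem nonlocalSum_sub_one_sub_le {c : ℝ} (hg : ∀ i, c ≤ g i) (j : ℤ) :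
    nonlocalSum γw N g (j - 1) - nonlocalSum γw N g j ≤ γw 0 * (g j - c) := by
  have := nonlocalSum_sub_one_sub_le_of_nonneg (g := fun i => g i - c) hN hγ_nonneg hγ_mono
    (fun i => sub_nonneg.2 (hg i)) j
  rwa [nonlocalSum_sub_const, nonlocalSum_sub_const, sub_sub_sub_cancel_right] at this

end NonlocalSum

section MonotoneLipschitz

variable {f : ℝ → ℝ} {s : Set ℝ} {L d x y : ℝ}

section
variable (hlip : ∀ x ∈ s, ∀ y ∈ s, |f y - f x| ≤ L * |y - x|) (hL : 0 ≤ L)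
  (hx : x ∈ s) (hy : y ∈ s) (hd : 0 ≤ d)
include hlip hL hx hy hd

theorem AntitoneOn.neg_mul_le_sub (hf : AntitoneOn f s) (hxy : x - y ≤ d) :
    -(L * d) ≤ f x - f y := by
  rcases le_total x y with h | h
  · nlinarith [hf hx hy h, mul_nonneg hL hd]
  · have := hlip y hy x hx
    rw [abs_of_nonneg (sub_nonneg.2 h)] at this
    nlinarith [neg_abs_le (f x - f y), mul_le_mul_of_nonneg_left hxy hL]

theorem MonotoneOn.neg_mul_le_sub (hf : MonotoneOn f s) (hxy : y - x ≤ d) :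
    -(L * d) ≤ f x - f y := by
  rcases le_total y x with h | h
  · nlinarith [hf hy hx h, mul_nonneg hL hd]
  · have := hlip x hx y hy
    rw [abs_of_nonneg (sub_nonneg.2 h)] at this
    nlinarith [le_abs_self (f y - f x), mul_le_mul_of_nonneg_left hxy hL]

end

theorem monotoneOn_Icc_of_deriv_nonneg {a b : ℝ} (hf : Differentiable ℝ f)
    (hf' : ∀ x ∈ Set.Icc a b, 0 ≤ deriv f x) : MonotoneOn f (Set.Icc a b) :=
  monotoneOn_of_deriv_nonneg (convex_Icc a b) hf.continuous.continuousOn hf.differentiableOn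
    fun x hx => hf' x (interior_subset hx)

theorem antitoneOn_Icc_of_deriv_nonpos {a b : ℝ} (hf : Differentiable ℝ f)
    (hf' : ∀ x ∈ Set.Icc a b, deriv f x ≤ 0) : AntitoneOn f (Set.Icc a b) :=
  antitoneOn_of_deriv_nonpos (convex_Icc a b) hf.continuous.continuousOn hf.differentiableOn
    fun x hx => hf' x (interior_subset hx)

end MonotoneLipschitz

section VelocityStep

variable {γw : ℕ → ℝ} {N : ℕ} {g : ℤ → ℝ} {f : ℝ → ℝ} {s : Set ℝ} {L c : ℝ}
  (hN : 0 < N) (hγ_nonneg : ∀ k < N, 0 ≤ γw k) (hγ_mono : ∀ k, k + 1 < N → γw (k + 1) ≤ γw k)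
  (hlip : ∀ x ∈ s, ∀ y ∈ s, |f y - f x| ≤ L * |y - x|) (hL : 0 ≤ L)
  (hs : ∀ i, nonlocalSum γw N g i ∈ s)
include hN hγ_nonneg hγ_mono hlip hL hs

theorem AntitoneOn.neg_mul_le_sub_nonlocalSum (hf : AntitoneOn f s) (hg : ∀ i, c ≤ g i) (j : ℤ) :
    -(L * (γw 0 * (g j - c))) ≤ f (nonlocalSum γw N g (j - 1)) - f (nonlocalSum γw N g j) :=
  hf.neg_mul_le_sub hlip hL (hs _) (hs _)
    (mul_nonneg (hγ_nonneg 0 hN) (sub_nonneg.2 (hg j)))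
    (nonlocalSum_sub_one_sub_le hN hγ_nonneg hγ_mono hg j)

theorem MonotoneOn.neg_mul_le_sub_nonlocalSum (hf : MonotoneOn f s) (hg : ∀ i, g i ≤ c) (j : ℤ) :
    -(L * (γw 0 * (c - g j))) ≤ f (nonlocalSum γw N g (j - 1)) - f (nonlocalSum γw N g j) := by
  have hΔ := nonlocalSum_sub_one_sub_le (g := fun i => -g i) hN hγ_nonneg hγ_mono
    (fun i => neg_le_neg (hg i)) j
  rw [nonlocalSum_neg, nonlocalSum_neg] at hΔ
  exact hf.neg_mul_le_sub hlip hL (hs _) (hs _)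
    (mul_nonneg (hγ_nonneg 0 hN) (sub_nonneg.2 (hg j))) (by linarith)

end VelocityStep

/-- **Lower bound on the difference of consecutive discrete nonlocal velocities.**
`V_{j-1} - V_j ≥ L₁ L₂ γ₀ (q_m - q_j)` for all `j ∈ ℤ`. -/
theorem discrete_velocity_difference_lower
    (N : ℕ) (hN : 0 < N) (γw : ℕ → ℝ) (V₁ V₂ : ℝ → ℝ)
    (qm qM L₁ L₂ : ℝ) (q : ℤ → ℝ)
    (hV₁ : ContDiff ℝ 1 V₁) (hV₂ : Differentiable ℝ V₂)
    (hγ_nonneg : ∀ k, k < N → 0 ≤ γw k)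
    (hγ_mono : ∀ k, k + 1 < N → γw (k + 1) ≤ γw k)
    (hbd : ∀ j : ℤ, qm ≤ q j ∧ q j ≤ qM)
    (hsign :
      ((∀ x ∈ attainSet γw N V₂ qm qM, deriv V₁ x ≤ 0) ∧
        (∀ x ∈ Set.Icc qm qM, 0 ≤ deriv V₂ x)) ∨
      ((∀ x ∈ attainSet γw N V₂ qm qM, 0 ≤ deriv V₁ x) ∧
        (∀ x ∈ Set.Icc qm qM, deriv V₂ x ≤ 0)))
    (hL₁ : ∀ a ∈ attainSet γw N V₂ qm qM, |deriv V₁ a| ≤ L₁)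
    (hL₂ : ∀ a ∈ Set.Icc qm qM, |deriv V₂ a| ≤ L₂) :
    ∀ j : ℤ, L₁ * L₂ * γw 0 * (qm - q j)
      ≤ discVel γw N V₁ V₂ q (j - 1) - discVel γw N V₁ V₂ q j := by
  intro j
  have hq : ∀ i, q i ∈ Set.Icc qm qM := hbd
  have hqm : qm ∈ Set.Icc qm qM := ⟨le_rfl, (hbd j).1.trans (hbd j).2⟩
  have hS := nonlocalSum_mem_attainSet hγ_nonneg hV₂.continuous.continuousOn hq
  have hV₁' : Differentiable ℝ V₁ := hV₁.differentiable one_ne_zero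
  have hlip₁ : ∀ x ∈ attainSet γw N V₂ qm qM, ∀ y ∈ attainSet γw N V₂ qm qM,
      |V₁ y - V₁ x| ≤ L₁ * |y - x| := fun x hx y hy =>
    (convex_Icc _ _).norm_image_sub_le_of_norm_deriv_le (fun x _ => hV₁' x) hL₁ hx hy
  have hL₁0 : 0 ≤ L₁ := (abs_nonneg _).trans (hL₁ _ (hS j))
  have hΔV₂ : |V₂ (q j) - V₂ qm| ≤ L₂ * (q j - qm) := by
    simpa [abs_of_nonneg (sub_nonneg.2 (hbd j).1)] using
      (convex_Icc qm qM).norm_image_sub_le_of_norm_deriv_le (fun x _ => hV₂ x) hL₂ hqm (hq j)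
  suffices h : -(L₁ * (γw 0 * |V₂ (q j) - V₂ qm|)) ≤
      discVel γw N V₁ V₂ q (j - 1) - discVel γw N V₁ V₂ q j by
    calc L₁ * L₂ * γw 0 * (qm - q j) = -(L₁ * (γw 0 * (L₂ * (q j - qm)))) := by ring
      _ ≤ -(L₁ * (γw 0 * |V₂ (q j) - V₂ qm|)) :=
        neg_le_neg (mul_le_mul_of_nonneg_left
          (mul_le_mul_of_nonneg_left hΔV₂ (hγ_nonneg 0 hN)) hL₁0)
      _ ≤ _ := h
  rw [discVel_eq_nonlocalSum, discVel_eq_nonlocalSum]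
  rcases hsign with ⟨hV₁_nonpos, hV₂_nonneg⟩ | ⟨hV₁_nonneg, hV₂_nonpos⟩
  · have hg i : V₂ qm ≤ V₂ (q i) :=
      monotoneOn_Icc_of_deriv_nonneg hV₂ hV₂_nonneg hqm (hq i) (hq i).1
    rw [abs_of_nonneg (sub_nonneg.2 (hg j))]
    exact (antitoneOn_Icc_of_deriv_nonpos hV₁' hV₁_nonpos).neg_mul_le_sub_nonlocalSum
      hN hγ_nonneg hγ_mono hlip₁ hL₁0 hS hg j
  · have hg i : V₂ (q i) ≤ V₂ qm :=
      antitoneOn_Icc_of_deriv_nonpos hV₂ hV₂_nonpos hqm (hq i) (hq i).1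
    rw [abs_sub_comm, abs_of_nonneg (sub_nonneg.2 (hg j))]
    exact (monotoneOn_Icc_of_deriv_nonneg hV₁' hV₁_nonneg).neg_mul_le_sub_nonlocalSum
      hN hγ_nonneg hγ_mono hlip₁ hL₁0 hS hg j
end

section
/- Let η > 0, let V₁ ∈ C²(ℝ) and V₂ ∈ C¹(ℝ) satisfy either (V₁' ≤ 0 and V₂' ≥ 0) or (V₁' ≥ 0 and V₂' ≤ 0), and additionally V₁'' ≥ 0. Let q be a nonnegative, twice continuously differentiable solution of ∂_t q(t,x) + ∂_x( V₁(W(t,x)) q(t,x) ) = 0 with W(t,x) := (1/η) ∫_x^{x+η} V₂(q(t,y)) dy. Fix a time t and a point x̃ such that ∂_x q(t,x) ≤ 0 for all x ∈ ℝ, ∂_x q(t,x̃) = 0, and ∂_x² q(t,x̃) = 0. Then ∂_t ∂_x q(t,x̃) ≤ 0; i.e. the dynamics preserve monotonically decreasing profiles. -/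
/-!
Write `u = q(t, ·)`, `W = movingAvgW η V₂ q t` and `F = V₁(W) u` for the flux. By Clairaut and
the equation, `∂ₜ∂ₓq = -F''`, and by the fundamental theorem of calculus
`W' = (V₂(u(x + η)) - V₂(u(x))) / η`. At a point where `u' = u'' = 0` the Leibniz rule leaves
`F'' = (V₁''(W) W'² + V₁'(W) V₂'(u(x + η)) u'(x + η) / η) u`: the first summand is nonnegative
by convexity of `V₁`, the second because `V₁'` and `V₂'` have opposite signs while `u' ≤ 0`
downstream, and `u ≥ 0`.
-/

open MeasureTheory Set

/-- The moving-average nonlocal term `W(t,x) = (1/η) ∫_x^{x+η} V₂(q(t,y)) dy`. -/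
noncomputable def movingAvgW (η : ℝ) (V₂ : ℝ → ℝ) (q : ℝ × ℝ → ℝ) (t x : ℝ) : ℝ :=
  (1 / η) * ∫ y in x..(x + η), V₂ (q (t, y))

section PartialDerivatives

variable {F : Type*} [NormedAddCommGroup F] [NormedSpace ℝ F] {f : ℝ × ℝ → F}
  {f' : ℝ × ℝ →L[ℝ] F} {s y : ℝ}

theorem HasFDerivAt.hasDerivAt_prodMk_left (hf : HasFDerivAt f f' (s, y)) :
    HasDerivAt (fun s => f (s, y)) (f' (1, 0)) s :=
  hf.comp_hasDerivAt s ((hasDerivAt_id s).prodMk (hasDerivAt_const s y))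

theorem HasFDerivAt.hasDerivAt_prodMk_right (hf : HasFDerivAt f f' (s, y)) :
    HasDerivAt (fun y => f (s, y)) (f' (0, 1)) y :=
  hf.comp_hasDerivAt y ((hasDerivAt_const y s).prodMk (hasDerivAt_id y))

end PartialDerivatives

theorem deriv_deriv_prodMk_comm {f : ℝ × ℝ → ℝ} (hf : ContDiff ℝ 2 f) (a b : ℝ) :
    deriv (fun s => deriv (fun y => f (s, y)) b) a
      = deriv (fun y => deriv (fun s => f (s, y)) a) b := by
  have hf1 : Differentiable ℝ f := hf.differentiable two_ne_zero
  have hf2 : HasFDerivAt (fderiv ℝ f) (fderiv ℝ (fderiv ℝ f) (a, b)) (a, b) :=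
    ((hf.fderiv_right (m := 1) le_rfl).differentiable one_ne_zero (a, b)).hasFDerivAt
  have hy : (fun s => deriv (fun y => f (s, y)) b) = fun s => fderiv ℝ f (s, b) (0, 1) :=
    funext fun s => (hf1 (s, b)).hasFDerivAt.hasDerivAt_prodMk_right.deriv
  have hs : (fun y => deriv (fun s => f (s, y)) a) = fun y => fderiv ℝ f (a, y) (1, 0) :=
    funext fun y => (hf1 (a, y)).hasFDerivAt.hasDerivAt_prodMk_left.deriv
  rw [hy, hs, (hf2.hasDerivAt_prodMk_left.clm_apply (hasDerivAt_const a _)).deriv,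
    (hf2.hasDerivAt_prodMk_right.clm_apply (hasDerivAt_const b _)).deriv]
  simpa using ((hf.contDiffAt (x := (a, b))).isSymmSndFDerivAt
    (by simp [minSmoothness_of_isRCLikeNormedField])).eq (1, 0) (0, 1)

theorem hasDerivAt_integral_self_add {f : ℝ → ℝ} (hf : Continuous f) (η x : ℝ) :
    HasDerivAt (fun x => ∫ y in x..x + η, f y) (f (x + η) - f x) x := by
  have hF : ∀ x, HasDerivAt (fun x => ∫ y in (0 : ℝ)..x, f y) (f x) x := fun x =>
    (hf.integral_hasStrictDerivAt 0 x).hasDerivAt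
  have hsub : (fun x => ∫ y in x..x + η, f y)
      = fun x => (∫ y in (0 : ℝ)..x + η, f y) - ∫ y in (0 : ℝ)..x, f y := by
    funext x
    rw [intervalIntegral.integral_interval_sub_left (hf.intervalIntegrable _ _)
      (hf.intervalIntegrable _ _)]
  rw [hsub]
  exact ((hF (x + η)).comp_add_const x η).sub (hF x)

theorem deriv_deriv_comp_mul {V W u : ℝ → ℝ} {x : ℝ} (hV : Differentiable ℝ V)
    (hV' : DifferentiableAt ℝ (deriv V) (W x)) (hW : Differentiable ℝ W)
    (hW' : DifferentiableAt ℝ (deriv W) x) (hu : Differentiable ℝ u)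
    (hu' : DifferentiableAt ℝ (deriv u) x) :
    deriv (deriv fun y => V (W y) * u y) x
      = (deriv (deriv V) (W x) * deriv W x ^ 2 + deriv V (W x) * deriv (deriv W) x) * u x
        + 2 * deriv V (W x) * deriv W x * deriv u x + V (W x) * deriv (deriv u) x := by
  have hF : deriv (fun y => V (W y) * u y)
      = fun y => deriv V (W y) * deriv W y * u y + V (W y) * deriv u y := by
    funext y
    exact ((((hV (W y)).hasDerivAt.comp y (hW y).hasDerivAt)).mul (hu y).hasDerivAt).deriv
  have hF' : HasDerivAt (fun y => deriv V (W y) * deriv W y * u y + V (W y) * deriv u y)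
      ((deriv (deriv V) (W x) * deriv W x * deriv W x + deriv V (W x) * deriv (deriv W) x) * u x
        + deriv V (W x) * deriv W x * deriv u x
        + (deriv V (W x) * deriv W x * deriv u x + V (W x) * deriv (deriv u) x)) x :=
    (((hV'.hasDerivAt.comp x (hW x).hasDerivAt).mul hW'.hasDerivAt).mul (hu x).hasDerivAt).add
      (((hV (W x)).hasDerivAt.comp x (hW x).hasDerivAt).mul hu'.hasDerivAt)
  rw [hF, hF'.deriv]
  ring

theorem mul_nonpos_of_opposite_signs {f g : ℝ → ℝ}
    (h : ((∀ x, f x ≤ 0) ∧ (∀ x, 0 ≤ g x)) ∨ ((∀ x, 0 ≤ f x) ∧ (∀ x, g x ≤ 0))) (a b : ℝ) :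
    f a * g b ≤ 0 := by
  rcases h with ⟨hf, hg⟩ | ⟨hf, hg⟩
  · exact mul_nonpos_of_nonpos_of_nonneg (hf a) (hg b)
  · exact mul_nonpos_of_nonneg_of_nonpos (hf a) (hg b)

section MovingAverage

variable (η : ℝ) {V₂ : ℝ → ℝ} {q : ℝ × ℝ → ℝ} {t : ℝ}

theorem hasDerivAt_movingAvgW (hg : Continuous fun y => V₂ (q (t, y))) (x : ℝ) :
    HasDerivAt (movingAvgW η V₂ q t) ((1 / η) * (V₂ (q (t, x + η)) - V₂ (q (t, x)))) x :=
  (hasDerivAt_integral_self_add hg η x).const_mul (1 / η)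

theorem hasDerivAt_deriv_movingAvgW (hg : Differentiable ℝ fun y => V₂ (q (t, y))) (x : ℝ) :
    HasDerivAt (deriv (movingAvgW η V₂ q t))
      ((1 / η) * (deriv (fun y => V₂ (q (t, y))) (x + η) - deriv (fun y => V₂ (q (t, y))) x))
      x := by
  rw [funext fun x => (hasDerivAt_movingAvgW η hg.continuous x).deriv]
  exact (((hg (x + η)).hasDerivAt.comp_add_const x η).sub (hg x).hasDerivAt).const_mul (1 / η)

end MovingAverage

/-- **Preservation of monotonically decreasing profiles.**
Let `V₁ ∈ C²`, `V₂ ∈ C¹` satisfy either (`V₁' ≤ 0` and `V₂' ≥ 0`) or (`V₁' ≥ 0` and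
`V₂' ≤ 0`) together with `V₁'' ≥ 0`, and let `q ≥ 0` be a `C²` solution of
`∂ₜ q + ∂ₓ(V₁(W) q) = 0` with `W(t,x) = (1/η) ∫_x^{x+η} V₂(q(t,y)) dy`. If at time `t` the
profile satisfies `∂ₓ q(t,·) ≤ 0` everywhere and `∂ₓ q(t,x₀) = 0`, `∂ₓ² q(t,x₀) = 0`, then
`∂ₜ ∂ₓ q(t,x₀) ≤ 0`. -/
theorem monotone_decreasing_preserved
    (η : ℝ) (hη : 0 < η) (q : ℝ × ℝ → ℝ) (V₁ V₂ : ℝ → ℝ)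
    (hV₁ : ContDiff ℝ 2 V₁) (hV₂ : ContDiff ℝ 1 V₂)
    (hsign : ((∀ x, deriv V₁ x ≤ 0) ∧ (∀ x, 0 ≤ deriv V₂ x)) ∨
             ((∀ x, 0 ≤ deriv V₁ x) ∧ (∀ x, deriv V₂ x ≤ 0)))
    (hV₁'' : ∀ x, 0 ≤ deriv (deriv V₁) x)
    (hq_smooth : ContDiff ℝ 2 q)
    (hq_nonneg : ∀ t x : ℝ, 0 ≤ q (t, x))
    (hPDE : ∀ t x : ℝ,
      deriv (fun s => q (s, x)) t
        + deriv (fun y => V₁ (movingAvgW η V₂ q t y) * q (t, y)) x = 0)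
    (t x₀ : ℝ)
    (hdec : ∀ x : ℝ, deriv (fun y => q (t, y)) x ≤ 0)
    (hcrit : deriv (fun y => q (t, y)) x₀ = 0)
    (hcrit2 : deriv (deriv (fun y => q (t, y))) x₀ = 0) :
    deriv (fun s => deriv (fun y => q (s, y)) x₀) t ≤ 0 := by
  set u := fun y => q (t, y)
  set W := movingAvgW η V₂ q t
  have hu : ContDiff ℝ 2 u := hq_smooth.comp (contDiff_const.prodMk contDiff_id)
  have hud : Differentiable ℝ u := hu.differentiable two_ne_zero
  have hV₂u : Differentiable ℝ fun y => V₂ (u y) :=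
    (hV₂.comp (hu.of_le one_le_two)).differentiable one_ne_zero
  have hV₂u' (y : ℝ) : deriv (fun y => V₂ (u y)) y = deriv V₂ (u y) * deriv u y :=
    deriv_comp (h₂ := V₂) (h := u) y ((hV₂.differentiable one_ne_zero) _) (hud y)
  have hW := hasDerivAt_deriv_movingAvgW η hV₂u
  have htime : deriv (fun s => deriv (fun y => q (s, y)) x₀) t
      = -deriv (deriv fun y => V₁ (W y) * u y) x₀ := by
    rw [deriv_deriv_prodMk_comm hq_smooth,
      funext fun y => eq_neg_of_add_eq_zero_left (hPDE t y)]
    exact deriv.fun_neg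
  have hWd : Differentiable ℝ W := fun x =>
    (hasDerivAt_movingAvgW η hV₂u.continuous x).differentiableAt
  rw [htime, deriv_deriv_comp_mul (hV₁.differentiable two_ne_zero)
      (hV₁.differentiable_deriv_two _) hWd (hW x₀).differentiableAt hud
      (hu.differentiable_deriv_two x₀),
    hcrit, hcrit2, (hW x₀).deriv, hV₂u', hV₂u', hcrit]
  simp only [mul_zero, sub_zero, add_zero, neg_nonpos]
  have hflux : 0 ≤ deriv V₁ (W x₀) * (1 / η * (deriv V₂ (u (x₀ + η)) * deriv u (x₀ + η))) := by
    calc 0 ≤ 1 / η * (deriv V₁ (W x₀) * deriv V₂ (u (x₀ + η)) * deriv u (x₀ + η)) :=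
          mul_nonneg (by positivity) <|
            mul_nonneg_of_nonpos_of_nonpos (mul_nonpos_of_opposite_signs hsign _ _) (hdec _)
      _ = _ := by ring
  exact mul_nonneg (add_nonneg (mul_nonneg (hV₁'' _) (sq_nonneg _)) hflux) (hq_nonneg t x₀)
end
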